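/- arXiv:1504.08238 — 2 statements merged into one kernel-verified Lean document; each statement's English description precedes it below -/
import Mathlib

section
/- Let X and Y be Banach spaces over 𝕂 (= ℝ or ℂ), let E be an invariant sequence space over X and let F be a strongly invariant sequence space over Y. If f : X → Y is compatible with F and the set A := { (x_j)_{j=1}^∞ ∈ E : (f(x_j))_{j=1}^∞ ∉ F } is nonempty, then A is spaceable in E. -/
open scoped Classical

/-- The zero-deleted sequence `x⁰`: if `x` has infinitely many nonzero coordinates, the
sequence of its nonzero coordinates in order; otherwise `0`. -/
noncomputable def zeroFree {X : Type*} [Zero X] (x : ℕ → X) : ℕ → X :=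
  if {j | x j ≠ 0}.Infinite then fun k => x (Nat.nth (fun j => x j ≠ 0) k) else 0

/-- An invariant sequence space over a Banach space `X` (Definition 1.1 of the paper):
an infinite-dimensional Banach space of `X`-valued sequences such that
(b1) for `x` with `x⁰ ≠ 0`, `x ∈ E ↔ x⁰ ∈ E` and `‖x‖ ≤ K‖x⁰‖`, and
(b2) `‖x j‖ ≤ ‖x‖` for every `x ∈ E` and every `j`.  Completeness and closedness are
expressed via the metric induced by the norm function. -/
structure InvariantSeqSpace (𝕂 : Type*) (X : Type*) [RCLike 𝕂]
    [NormedAddCommGroup X] [NormedSpace 𝕂 X] where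
  carrier : Submodule 𝕂 (ℕ → X)
  norm : (ℕ → X) → ℝ
  norm_nonneg : ∀ x ∈ carrier, 0 ≤ norm x
  norm_eq_zero_iff : ∀ x ∈ carrier, (norm x = 0 ↔ x = 0)
  norm_smul : ∀ (a : 𝕂), ∀ x ∈ carrier, norm (a • x) = ‖a‖ * norm x
  norm_add_le : ∀ x ∈ carrier, ∀ y ∈ carrier, norm (x + y) ≤ norm x + norm y
  complete : ∀ u : ℕ → ℕ → X, (∀ n, u n ∈ carrier) →
    (∀ ε : ℝ, 0 < ε → ∃ N, ∀ m ≥ N, ∀ n ≥ N, norm (u m - u n) < ε) →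
    ∃ x ∈ carrier, ∀ ε : ℝ, 0 < ε → ∃ N, ∀ n ≥ N, norm (u n - x) < ε
  infiniteDimensional : ¬ Module.Finite 𝕂 carrier
  K : ℝ
  K_pos : 0 < K
  mem_iff_zeroFree_mem : ∀ x : ℕ → X, zeroFree x ≠ 0 → (x ∈ carrier ↔ zeroFree x ∈ carrier)
  norm_le_K_mul : ∀ x : ℕ → X, zeroFree x ≠ 0 → x ∈ carrier → norm x ≤ K * norm (zeroFree x)
  coord_norm_le : ∀ x ∈ carrier, ∀ j : ℕ, ‖x j‖ ≤ norm x

/-- A strongly invariant sequence space: an invariant sequence space containing `c₀₀(X)`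
and such that a sequence belongs to the space iff all of its subsequences do. -/
structure StronglyInvariantSeqSpace (𝕂 : Type*) (X : Type*) [RCLike 𝕂]
    [NormedAddCommGroup X] [NormedSpace 𝕂 X] extends InvariantSeqSpace 𝕂 X where
  c00_subset : ∀ x : ℕ → X, {j | x j ≠ 0}.Finite → x ∈ carrier
  mem_iff_subseq : ∀ x : ℕ → X,
    x ∈ carrier ↔ ∀ n : ℕ → ℕ, StrictMono n → (fun k => x (n k)) ∈ carrier

/-- A subset `A` of an invariant sequence space `E` is spaceable if `A ∪ {0}` contains a
closed (w.r.t. the norm of `E`) infinite-dimensional linear subspace of `E`. -/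
def Spaceable {𝕂 X : Type*} [RCLike 𝕂] [NormedAddCommGroup X] [NormedSpace 𝕂 X]
    (E : InvariantSeqSpace 𝕂 X) (A : Set (ℕ → X)) : Prop :=
  ∃ V : Submodule 𝕂 (ℕ → X), V ≤ E.carrier ∧ ¬ Module.Finite 𝕂 V ∧
    (V : Set (ℕ → X)) ⊆ A ∪ {0} ∧
    ∀ u : ℕ → ℕ → X, (∀ n, u n ∈ V) → ∀ z ∈ E.carrier,
      (∀ ε : ℝ, 0 < ε → ∃ N, ∀ n ≥ N, E.norm (u n - z) < ε) → z ∈ V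

/-- `f : X → Y` with `f 0 = 0` is compatible with an invariant sequence space `F` over `Y`:
`(f(x_j))_j ∉ F` implies `(f(a x_j))_j ∉ F` for every scalar `a ≠ 0`. -/
def Compatible {𝕂 X Y : Type*} [RCLike 𝕂] [NormedAddCommGroup X] [NormedSpace 𝕂 X]
    [NormedAddCommGroup Y] [NormedSpace 𝕂 Y]
    (f : X → Y) (F : InvariantSeqSpace 𝕂 Y) : Prop :=
  f 0 = 0 ∧ ∀ (x : ℕ → X) (a : 𝕂), a ≠ 0 →
    (fun j => f (x j)) ∉ F.carrier → (fun j => f (a • x j)) ∉ F.carrier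


/-!
Pick `x ∈ A`. Since `c₀₀(Y) ⊆ F` and `f 0 = 0`, `x` has infinitely many nonzero coordinates.
Split `ℕ` into the infinitely many infinite blocks `{Nat.pair i k | k}` and let `V` consist of
the sequences of `E` that carry `c i • x` on the `i`-th block. The copy of `x` on a single block
has the same zero-deleted sequence as `x`, hence lies in `E`; these copies are independent,
so `V` is infinite-dimensional. A nonzero element of `V` has a block with `c i ≠ 0`; along it
the image under `f` is `(f (c i • x k))ₖ ∉ F` by compatibility, so the image of the whole
sequence is not in `F` by strong invariance. Finally, convergence in `E` is coordinatewise,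
and, as `x ≠ 0`, block sequences form a closed set for the product topology.
-/

open Filter Topology

section ZeroFree

variable {X : Type*} [Zero X]

theorem zeroFree_ne_zero_iff {x : ℕ → X} : zeroFree x ≠ 0 ↔ {j | x j ≠ 0}.Infinite := by
  by_cases hx : {j | x j ≠ 0}.Infinite
  · refine iff_of_true (fun h => ?_) hx
    have h0 := congrFun h 0
    simp only [zeroFree, if_pos hx, Pi.zero_apply] at h0
    exact Nat.nth_mem_of_infinite hx 0 h0
  · simp [zeroFree, hx]

theorem zeroFree_eq_of_strictMono {g : ℕ → ℕ} (hg : StrictMono g) {x y : ℕ → X}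
    (hyx : ∀ k, y (g k) = x k) (hy : ∀ j, y j ≠ 0 → j ∈ Set.range g) :
    zeroFree y = zeroFree x := by
  have hsupp : {j | y j ≠ 0} = g '' {k | x k ≠ 0} := by
    ext j
    constructor
    · intro hj
      obtain ⟨k, rfl⟩ := hy j hj
      exact ⟨k, by simpa [hyx] using hj, rfl⟩
    · rintro ⟨k, hk, rfl⟩
      simpa [hyx] using hk
  have hinf : {j | y j ≠ 0}.Infinite ↔ {k | x k ≠ 0}.Infinite := by
    rw [hsupp, Set.infinite_image_iff hg.injective.injOn]
  by_cases hx : {k | x k ≠ 0}.Infinite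
  · have hcomp : (fun k => y (g k) ≠ 0) = fun k => x k ≠ 0 := funext fun k => by rw [hyx]
    simp only [zeroFree, if_pos hx, if_pos (hinf.2 hx)]
    funext n
    rw [← Nat.nth_comp_of_strictMono hg hy fun hfin => absurd hfin (hinf.2 hx), hcomp, hyx]
  · simp only [zeroFree, if_neg hx, if_neg (mt hinf.1 hx)]

end ZeroFree

theorem Nat.strictMono_pair (i : ℕ) : StrictMono (Nat.pair i) :=
  fun _ _ => Nat.pair_lt_pair_right i

section BlockCopies

variable {R M : Type*}

/-- `blockCopies x c` carries `c i • x` on the `i`-th block `{Nat.pair i k | k}` of `ℕ`. -/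
def blockCopies [Semiring R] [AddCommMonoid M] [Module R M] (x : ℕ → M) :
    (ℕ → R) →ₗ[R] (ℕ → M) where
  toFun c j := c (Nat.unpair j).1 • x (Nat.unpair j).2
  map_add' _ _ := funext fun _ => add_smul _ _ _
  map_smul' _ _ := funext fun _ => mul_smul _ _ _

theorem blockCopies_apply [Semiring R] [AddCommMonoid M] [Module R M] (x : ℕ → M)
    (c : ℕ → R) (j : ℕ) : blockCopies x c j = c (Nat.unpair j).1 • x (Nat.unpair j).2 :=
  rfl

@[simp]
theorem blockCopies_apply_pair [Semiring R] [AddCommMonoid M] [Module R M] (x : ℕ → M)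
    (c : ℕ → R) (i k : ℕ) : blockCopies x c (Nat.pair i k) = c i • x k := by
  rw [blockCopies_apply, Nat.unpair_pair]

theorem zeroFree_blockCopies_single [Semiring R] [AddCommMonoid M] [Module R M]
    (x : ℕ → M) (i : ℕ) : zeroFree (blockCopies x (Pi.single i (1 : R))) = zeroFree x := by
  refine zeroFree_eq_of_strictMono (Nat.strictMono_pair i) (fun k => by simp)
    fun j hj => ⟨(Nat.unpair j).2, ?_⟩
  have hi : (Nat.unpair j).1 = i := by
    by_contra hne
    exact hj (by rw [blockCopies_apply, Pi.single_eq_of_ne hne, zero_smul])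
  subst hi
  exact Nat.pair_unpair j

theorem linearIndependent_blockCopies_single [DivisionRing R] [AddCommGroup M] [Module R M]
    {x : ℕ → M} {k₀ : ℕ} (hx : x k₀ ≠ 0) :
    LinearIndependent R fun i => blockCopies x (Pi.single i (1 : R)) := by
  refine (Pi.linearIndependent_single_one ℕ R).map' _ (LinearMap.ker_eq_bot.2 fun c d h => ?_)
  funext i
  have hi := congrFun h (Nat.pair i k₀)
  rw [blockCopies_apply_pair, blockCopies_apply_pair, ← sub_eq_zero, ← sub_smul] at hi
  exact sub_eq_zero.1 ((smul_eq_zero.1 hi).resolve_right hx)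

theorem isClosed_range_blockCopies [Field R] [TopologicalSpace R] [IsTopologicalRing R]
    [AddCommGroup M] [TopologicalSpace M] [T2Space M] [Module R M] [ContinuousSMul R M]
    [SeparatingDual R M] {x : ℕ → M} {k₀ : ℕ} (hx : x k₀ ≠ 0) :
    IsClosed (Set.range (blockCopies (R := R) x)) := by
  obtain ⟨φ, hφ⟩ := SeparatingDual.exists_eq_one (R := R) hx
  -- `φ` reads off the coefficient of block `i` from the position `Nat.pair i k₀`.
  have hrange : Set.range (blockCopies (R := R) x) =
      {z | z = blockCopies x fun i => φ (z (Nat.pair i k₀))} := by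
    ext z
    refine ⟨?_, fun hz => ⟨_, hz.symm⟩⟩
    rintro ⟨c, rfl⟩
    simp [hφ]
  rw [hrange]
  exact isClosed_eq continuous_id <| continuous_pi fun j => by
    simp only [blockCopies_apply]
    fun_prop

end BlockCopies

namespace InvariantSeqSpace

variable {𝕂 X : Type*} [RCLike 𝕂] [NormedAddCommGroup X] [NormedSpace 𝕂 X]
  (E : InvariantSeqSpace 𝕂 X)

theorem mem_of_zeroFree_eq {x y : ℕ → X} (hx : x ∈ E.carrier) (hx0 : zeroFree x ≠ 0)
    (h : zeroFree y = zeroFree x) : y ∈ E.carrier :=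
  (E.mem_iff_zeroFree_mem y (h ▸ hx0)).2 (h ▸ (E.mem_iff_zeroFree_mem x hx0).1 hx)

theorem tendsto_of_norm_sub_lt {u : ℕ → ℕ → X} {z : ℕ → X} (hu : ∀ n, u n ∈ E.carrier)
    (hz : z ∈ E.carrier) (h : ∀ ε : ℝ, 0 < ε → ∃ N, ∀ n ≥ N, E.norm (u n - z) < ε) :
    Tendsto u atTop (𝓝 z) := by
  refine tendsto_pi_nhds.2 fun j => Metric.tendsto_atTop.2 fun ε hε => ?_
  obtain ⟨N, hN⟩ := h ε hε
  refine ⟨N, fun n hn => ?_⟩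
  rw [dist_eq_norm]
  exact (E.coord_norm_le _ (E.carrier.sub_mem (hu n) hz) j).trans_lt (hN n hn)

end InvariantSeqSpace

namespace StronglyInvariantSeqSpace

variable {𝕂 Y : Type*} [RCLike 𝕂] [NormedAddCommGroup Y] [NormedSpace 𝕂 Y]
  (F : StronglyInvariantSeqSpace 𝕂 Y)

theorem infinite_support_of_notMem {y : ℕ → Y} (hy : y ∉ F.carrier) :
    {j | y j ≠ 0}.Infinite :=
  fun hfin => hy (F.c00_subset y hfin)

theorem notMem_of_comp_notMem {y : ℕ → Y} {n : ℕ → ℕ} (hn : StrictMono n)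
    (h : (fun k => y (n k)) ∉ F.carrier) : y ∉ F.carrier :=
  fun hy => h ((F.mem_iff_subseq y).1 hy n hn)

variable {X : Type*} [NormedAddCommGroup X] [NormedSpace 𝕂 X] {f : X → Y}

theorem comp_blockCopies_notMem (hf : Compatible f F.toInvariantSeqSpace) {x : ℕ → X}
    (hx : (fun j => f (x j)) ∉ F.carrier) {c : ℕ → 𝕂} (hc : c ≠ 0) :
    (fun j => f (blockCopies x c j)) ∉ F.carrier := by
  obtain ⟨i, hi⟩ := Function.ne_iff.1 hc
  refine F.notMem_of_comp_notMem (Nat.strictMono_pair i) ?_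
  simpa only [blockCopies_apply_pair] using hf.2 x (c i) hi hx

end StronglyInvariantSeqSpace

theorem spaceability_of_A_general {𝕂 X Y : Type*} [RCLike 𝕂]
    [NormedAddCommGroup X] [NormedSpace 𝕂 X]
    [NormedAddCommGroup Y] [NormedSpace 𝕂 Y]
    (E : InvariantSeqSpace 𝕂 X) (F : StronglyInvariantSeqSpace 𝕂 Y)
    (f : X → Y) (hf : Compatible f F.toInvariantSeqSpace)
    (hA : {x : ℕ → X | x ∈ E.carrier ∧ (fun j => f (x j)) ∉ F.carrier}.Nonempty) :
    Spaceable E {x : ℕ → X | x ∈ E.carrier ∧ (fun j => f (x j)) ∉ F.carrier} := by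
  obtain ⟨x, hxE, hxF⟩ := hA
  have hsupp : {j | x j ≠ 0}.Infinite :=
    (F.infinite_support_of_notMem hxF).mono fun j (hj : f (x j) ≠ 0) h0 => hj (by rw [h0, hf.1])
  obtain ⟨k₀, hk₀⟩ := hsupp.nonempty
  set V := E.carrier ⊓ LinearMap.range (blockCopies (R := 𝕂) x)
  have hsingle (i : ℕ) : blockCopies x (Pi.single i (1 : 𝕂)) ∈ V :=
    ⟨E.mem_of_zeroFree_eq hxE (zeroFree_ne_zero_iff.2 hsupp) (zeroFree_blockCopies_single x i),
      LinearMap.mem_range_self _ _⟩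
  have hindep : LinearIndependent 𝕂 fun i => (⟨_, hsingle i⟩ : V) :=
    .of_comp V.subtype (linearIndependent_blockCopies_single hk₀)
  refine ⟨V, inf_le_left, fun _ => Module.Finite.not_linearIndependent_of_infinite _ hindep,
    ?_, fun u hu z hzE hconv => ⟨hzE, ?_⟩⟩
  · rintro _ ⟨hzE, c, rfl⟩
    by_cases hc : c = 0
    · exact Or.inr (by simp [hc])
    · exact Or.inl ⟨hzE, F.comp_blockCopies_notMem hf hxF hc⟩
  · exact (isClosed_range_blockCopies hk₀).mem_of_tendsto
      (E.tendsto_of_norm_sub_lt (fun n => (hu n).1) hzE hconv) (.of_forall fun n => (hu n).2)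

/-- **Corollary 2.9.**  If `E` is an invariant sequence space over `X`, `F` is a strongly
invariant sequence space over `Y`, `f : X → Y` is compatible with `F` and
`A = {(x_j) ∈ E : (f(x_j)) ∉ F}` is nonempty, then `A` is spaceable in `E`. -/
theorem spaceability_of_A {𝕂 X Y : Type*} [RCLike 𝕂]
    [NormedAddCommGroup X] [NormedSpace 𝕂 X] [CompleteSpace X]
    [NormedAddCommGroup Y] [NormedSpace 𝕂 Y] [CompleteSpace Y]
    (E : InvariantSeqSpace 𝕂 X) (F : StronglyInvariantSeqSpace 𝕂 Y)
    (f : X → Y) (hf : Compatible f F.toInvariantSeqSpace)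
    (hA : {x : ℕ → X | x ∈ E.carrier ∧ (fun j => f (x j)) ∉ F.carrier}.Nonempty) :
    Spaceable E {x : ℕ → X | x ∈ E.carrier ∧ (fun j => f (x j)) ∉ F.carrier} :=
  spaceability_of_A_general E F f hf hA
end

section
/- Let Y be a Banach space over 𝕂 (= ℝ or ℂ) and let F be a strongly invariant sequence space over 𝕂. Then for every x ∈ Y^ℕ with x⁰ ≠ 0, x ∈ F^w(Y) if and only if x⁰ ∈ F^w(Y). -/
open scoped Classical

/-- For an invariant sequence space `F` over the scalar field `𝕂` and a Banach space `Y`,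
`F^w(Y) = {(x_j) ∈ Y^ℕ : (φ(x_j))_j ∈ F for every φ ∈ Y'}`. -/
def weakSpace {𝕂 : Type*} [RCLike 𝕂] (F : InvariantSeqSpace 𝕂 𝕂)
    (Y : Type*) [NormedAddCommGroup Y] [NormedSpace 𝕂 Y] : Set (ℕ → Y) :=
  {x | ∀ φ : Y →L[𝕂] 𝕂, (fun j => φ (x j)) ∈ F.carrier}

/-!
For a functional `φ`, `(φ(x⁰_k))_k` is a subsequence of `(φ(x_j))_j`, and `(φ ∘ x)⁰` is in turn
a subsequence of `(φ(x⁰_k))_k`, because `φ ∘ x` can only be nonzero where `x` is. Strong invariance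
moves membership along subsequences, invariance moves it from `(φ ∘ x)⁰` back to `φ ∘ x`, and
finitely supported sequences lie in `c₀₀`.
-/

section ZeroFree

variable {X Z : Type*} [Zero X] [Zero Z]

theorem zeroFree_of_infinite {x : ℕ → X} (hx : {j | x j ≠ 0}.Infinite) :
    zeroFree x = fun k => x (Nat.nth (fun j => x j ≠ 0) k) :=
  if_pos hx

theorem zeroFree_of_finite {x : ℕ → X} (hx : {j | x j ≠ 0}.Finite) : zeroFree x = 0 :=
  if_neg (Set.not_infinite.mpr hx)

theorem zeroFree_ne_zero {x : ℕ → X} (hx : {j | x j ≠ 0}.Infinite) : zeroFree x ≠ 0 := by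
  intro h
  apply Nat.nth_mem_of_infinite hx 0
  simpa [zeroFree_of_infinite hx] using congr_fun h 0

theorem exists_strictMono_zeroFree_comp_eq {f : X → Z} (hf : f 0 = 0) {x : ℕ → X}
    (hfx : {j | f (x j) ≠ 0}.Infinite) :
    ∃ m : ℕ → ℕ, StrictMono m ∧ zeroFree (fun j => f (x j)) = fun k => f (zeroFree x (m k)) := by
  have hsupp : ∀ j, f (x j) ≠ 0 → x j ≠ 0 := fun j h hj => h (by rw [hj, hf])
  have hx : {j | x j ≠ 0}.Infinite := hfx.mono hsupp
  have hnth (k : ℕ) := hsupp _ (Nat.nth_mem_of_infinite hfx k)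
  refine ⟨fun k => Nat.count (fun j => x j ≠ 0) (Nat.nth (fun j => f (x j) ≠ 0) k), ?_, ?_⟩
  · exact fun k l hkl => Nat.count_strict_mono (hnth k) (Nat.nth_strictMono hfx hkl)
  · funext k
    rw [zeroFree_of_infinite hfx, zeroFree_of_infinite hx]
    exact congrArg (fun j => f (x j)) (Nat.nth_count (p := fun j => x j ≠ 0) (hnth k)).symm

end ZeroFree

namespace StronglyInvariantSeqSpace

variable {𝕂 X Z : Type*} [RCLike 𝕂] [NormedAddCommGroup Z] [NormedSpace 𝕂 Z] [Zero X]
  (E : StronglyInvariantSeqSpace 𝕂 Z) {f : X → Z} {x : ℕ → X}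

theorem comp_zeroFree_mem_of_comp_mem (hf : f 0 = 0) (hfx : (fun j => f (x j)) ∈ E.carrier) :
    (fun k => f (zeroFree x k)) ∈ E.carrier := by
  by_cases hx : {j | x j ≠ 0}.Infinite
  · rw [zeroFree_of_infinite hx]
    exact (E.mem_iff_subseq _).mp hfx _ (Nat.nth_strictMono hx)
  · simp only [zeroFree_of_finite (Set.not_infinite.mp hx), Pi.zero_apply, hf]
    exact E.carrier.zero_mem

theorem comp_mem_of_comp_zeroFree_mem (hf : f 0 = 0)
    (hfx : (fun k => f (zeroFree x k)) ∈ E.carrier) : (fun j => f (x j)) ∈ E.carrier := by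
  by_cases hsupp : {j | f (x j) ≠ 0}.Infinite
  · obtain ⟨m, hm, hzero⟩ := exists_strictMono_zeroFree_comp_eq hf hsupp
    refine (E.mem_iff_zeroFree_mem _ (zeroFree_ne_zero hsupp)).mpr ?_
    rw [hzero]
    exact (E.mem_iff_subseq _).mp hfx m hm
  · exact E.c00_subset _ (Set.not_infinite.mp hsupp)

theorem comp_mem_iff_comp_zeroFree_mem (hf : f 0 = 0) :
    (fun j => f (x j)) ∈ E.carrier ↔ (fun k => f (zeroFree x k)) ∈ E.carrier :=
  ⟨E.comp_zeroFree_mem_of_comp_mem hf, E.comp_mem_of_comp_zeroFree_mem hf⟩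

end StronglyInvariantSeqSpace

theorem weakSpace_mem_iff_zeroFree_mem_general {𝕂 Y : Type*} [RCLike 𝕂]
    [NormedAddCommGroup Y] [NormedSpace 𝕂 Y]
    (F : StronglyInvariantSeqSpace 𝕂 𝕂) (x : ℕ → Y) :
    x ∈ weakSpace F.toInvariantSeqSpace Y ↔
      zeroFree x ∈ weakSpace F.toInvariantSeqSpace Y :=
  forall_congr' fun φ => F.comp_mem_iff_comp_zeroFree_mem (map_zero φ)

/-- **Lemma 3.2, first part.**  If `F` is a strongly invariant sequence space over `𝕂`,
then for every `x ∈ Y^ℕ` with `x⁰ ≠ 0`: `x ∈ F^w(Y) ↔ x⁰ ∈ F^w(Y)`. -/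
theorem weakSpace_mem_iff_zeroFree_mem {𝕂 Y : Type*} [RCLike 𝕂]
    [NormedAddCommGroup Y] [NormedSpace 𝕂 Y] [CompleteSpace Y]
    (F : StronglyInvariantSeqSpace 𝕂 𝕂) (x : ℕ → Y) (hx : zeroFree x ≠ 0) :
    x ∈ weakSpace F.toInvariantSeqSpace Y ↔
      zeroFree x ∈ weakSpace F.toInvariantSeqSpace Y :=
  weakSpace_mem_iff_zeroFree_mem_general F x
end
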